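/- Let Ψ ≥ 1, C ≥ 1 and T ≥ 1 be integers with Ψ dividing C. Suppose c is a synchronous C-counter stabilising by round T with respect to F, and define p(v,t) = 1 if c(v,t) ≡ 0 (mod Ψ) and p(v,t) = 0 otherwise. Then p is a strong Ψ-pulser stabilising by round T + Ψ − 1 with respect to F. -/
import Mathlib


/-- `p` is a strong `Ψ`-pulser stabilising by round `T` with respect to the set `F`
of faulty nodes: there is a round `t0 ≤ T` such that every correct node pulses
exactly at the rounds `t0 + k * Ψ` for `k ≥ 0`. -/
def IsStrongPulser {V : Type*} (F : Set V) (Ψ T : ℕ) (p : V → ℕ → ℕ) : Prop :=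
  ∃ t0, 1 ≤ t0 ∧ t0 ≤ T ∧
    ∀ v, v ∉ F → ∀ t, t0 ≤ t → (p v t = 1 ↔ ∃ k, t = t0 + k * Ψ)

/-- `c` is a synchronous `C`-counter stabilising by round `T` with respect to the
set `F` of faulty nodes: there is a round `t0 ≤ T` from which on all correct nodes
agree on the counter value and increment it by one modulo `C` each round. -/
def IsCounter {V : Type*} (F : Set V) (C T : ℕ) (c : V → ℕ → ℕ) : Prop :=
  ∃ t0, 1 ≤ t0 ∧ t0 ≤ T ∧
    ∀ t, t0 ≤ t →
      (∀ v, v ∉ F → ∀ w, w ∉ F → c v t = c w t) ∧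
      (∀ v, v ∉ F → c v (t + 1) = (c v t + 1) % C)

/-- If `Ψ` divides `C`, `c` is a synchronous `C`-counter
stabilising by round `T` with respect to `F`, and `p(v,t) = 1` iff
`c(v,t) ≡ 0 (mod Ψ)`, then `p` is a strong `Ψ`-pulser stabilising by round
`T + Ψ − 1` with respect to `F`. -/
theorem counter_to_strong_pulser {V : Type*} (F : Set V) (C Ψ T : ℕ)
    (hΨ : 1 ≤ Ψ) (hC : 1 ≤ C) (hT : 1 ≤ T) (hdvd : Ψ ∣ C)
    (c : V → ℕ → ℕ)
    (hrange : ∀ v, v ∉ F → ∀ t, c v t < C)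
    (hc : IsCounter F C T c) :
    IsStrongPulser F Ψ (T + Ψ - 1) (fun v t => if c v t % Ψ = 0 then 1 else 0) := by
  obtain ⟨s, hs1, hsT, hstab⟩ := hc
  by_cases hcor : ∃ v0, v0 ∉ F
  · obtain ⟨v0, hv0⟩ := hcor
    set a := c v0 s with ha
    have key : ∀ m, ∀ v, v ∉ F → c v (s + m) % Ψ = (a + m) % Ψ := by
      intro m
      induction m with
      | zero =>
        intro v hv
        simp [(hstab s le_rfl).1 v hv v0 hv0, ha]
      | succ m ih =>
        intro v hv
        have h1 : c v (s + m + 1) = (c v (s + m) + 1) % C :=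
          (hstab (s + m) (Nat.le_add_right _ _)).2 v hv
        have h2 : c v (s + (m + 1)) % Ψ = (c v (s + m) + 1) % Ψ := by
          rw [show s + (m + 1) = s + m + 1 by ring, h1, Nat.mod_mod_of_dvd _ hdvd]
        rw [h2, Nat.add_mod, ih v hv, ← Nat.add_mod, ← Nat.add_assoc]
    set j := (Ψ - a % Ψ) % Ψ with hj
    have hjlt : j < Ψ := Nat.mod_lt _ hΨ
    have haj : (a + j) % Ψ = 0 := by
      have halt : a % Ψ < Ψ := Nat.mod_lt _ hΨ
      by_cases h0 : a % Ψ = 0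
      · have : j = 0 := by simp [hj, h0]
        rw [this, Nat.add_zero]; exact h0
      · have hjy : j = Ψ - a % Ψ := Nat.mod_eq_of_lt (by omega)
        rw [Nat.add_mod, Nat.mod_eq_of_lt hjlt, hjy]
        have : a % Ψ + (Ψ - a % Ψ) = Ψ := by omega
        rw [this, Nat.mod_self]
    refine ⟨s + j, le_trans hs1 (Nat.le_add_right _ _), by omega, ?_⟩
    intro v hv t ht
    have hts : s ≤ t := le_trans (Nat.le_add_right _ _) ht
    have hcv : c v t % Ψ = (a + (t - s)) % Ψ := by
      have := key (t - s) v hv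
      rwa [Nat.add_sub_cancel' hts] at this
    have hd : t - s = j + (t - (s + j)) := by omega
    have hmod : c v t % Ψ = (t - (s + j)) % Ψ := by
      rw [hcv, hd, ← Nat.add_assoc, Nat.add_mod, haj, Nat.zero_add,
        Nat.mod_mod_of_dvd _ dvd_rfl]
    simp only [hmod]
    constructor
    · intro h
      have h' : (t - (s + j)) % Ψ = 0 := by by_contra hcon; simp [hcon] at h
      refine ⟨(t - (s + j)) / Ψ, ?_⟩
      have := Nat.div_mul_cancel (Nat.dvd_of_mod_eq_zero h')
      omega
    · rintro ⟨k, rfl⟩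
      have : s + j + k * Ψ - (s + j) = k * Ψ := by omega
      simp [this, Nat.mul_mod_left]
  · push_neg at hcor
    exact ⟨T, hT, by omega, fun v hv => absurd (hcor v) hv⟩
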